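/- arXiv:1305.5767 — 4 statements merged into one kernel-verified Lean document; each statement's English description precedes it below -/
import Mathlib

section
/- With χ and S = χ^{-1}χ^T as in the dP_5 K-theory setup, the fixed space of S^2 (the 1-eigenspace of S^2) has dimension exactly 6. -/
/-!
`χ` is unitriangular with explicit inverse, and a direct computation gives
`S² - 1 = 𝟙 vᵀ` with `𝟙` the all-ones vector and `v = (-1, -1, -1, -1, -1, 4, 1)`.
A rank-one matrix `u vᵀ` with `u ≠ 0` kills exactly the hyperplane `v⊥`, which here has
dimension `7 - 1 = 6`.
-/

open Matrix

theorem Matrix.finrank_ker_toLin'_vecMulVec_add_one {K m n : Type*} [Field K] [Fintype n]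
    [DecidableEq n] {u : m → K} {v : n → K} (hu : u ≠ 0) (hv : v ≠ 0) :
    Module.finrank K (LinearMap.ker (toLin' (vecMulVec u v))) + 1 = Fintype.card n := by
  have hker : LinearMap.ker (toLin' (vecMulVec u v)) = LinearMap.ker (dotProductEquiv K n v) := by
    ext x
    simp [vecMulVec_mulVec, hu]
  rw [hker, Module.Dual.finrank_ker_add_one_of_ne_zero ((LinearEquiv.map_ne_zero_iff _).2 hv),
    Module.finrank_fintype_fun_eq_card]

/-- For the dP_5 Serre operator `S = χ⁻¹ χᵀ` on `ℚ^7`, the fixed space of `S²`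
(the 1-eigenspace of `S²`) has dimension exactly 6. -/
theorem stmt7 (χ S : Matrix (Fin 7) (Fin 7) ℚ)
    (hχ : χ = !![1,0,0,0,0,-1,-1;
                 0,1,0,0,0,-1,-1;
                 0,0,1,0,0,-1,-1;
                 0,0,0,1,0,-1,-1;
                 0,0,0,0,1,-1,-1;
                 0,0,0,0,0,1,3;
                 0,0,0,0,0,0,1])
    (hS : S = χ⁻¹ * χᵀ) :
    Module.finrank ℚ (LinearMap.ker (Matrix.toLin' (S ^ 2 - 1))) = 6 := by
  have hχ_inv : χ⁻¹ = !![1,0,0,0,0,1,-2;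
                         0,1,0,0,0,1,-2;
                         0,0,1,0,0,1,-2;
                         0,0,0,1,0,1,-2;
                         0,0,0,0,1,1,-2;
                         0,0,0,0,0,1,-3;
                         0,0,0,0,0,0,1] := by
    rw [hχ]
    exact inv_eq_left_inv (by decide +kernel)
  have hS_sq : S ^ 2 - 1 = vecMulVec 1 ![-1,-1,-1,-1,-1,4,1] := by
    rw [hS, hχ_inv, hχ]
    decide +kernel
  have hv : (![-1,-1,-1,-1,-1,4,1] : Fin 7 → ℚ) ≠ 0 := Function.ne_iff.2 ⟨(6 : Fin 7), by simp⟩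
  rw [hS_sq]
  simpa using
    finrank_ker_toLin'_vecMulVec_add_one (one_ne_zero : (1 : Fin 7 → ℚ) ≠ 0) hv
end

section
/- For the matrix S_6 = χ_6^{-1} χ_6^T associated to dP_6 (an 8×8 matrix), S_6^3 = I, and the 1-eigenspace of S_6 is 6-dimensional. -/
/-!
If `f ^ n = 1` and `n` is invertible, the average `n⁻¹ • ∑_{i < n} f ^ i` is a projection onto
the fixed space `ker (f - 1)`, so `n * dim ker (f - 1) = tr (∑_{i < n} f ^ i)`.

`χ_6` is unitriangular with an explicit integral inverse, so `S_6` is an explicit integral matrix;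
`S_6 ^ 3 = 1` and `tr (1 + S_6 + S_6 ^ 2) = 18` are then finite computations, giving a fixed space
of dimension `18 / 3 = 6`.
-/

open Matrix

open Finset

namespace Module.End

open LinearMap

variable {K V : Type*} [Field K] [AddCommGroup V] [Module K V] {f : Module.End K V} {n : ℕ}

theorem isProj_ker_sub_one_of_pow_eq_one (hf : f ^ n = 1) (hn : (n : K) ≠ 0) :
    IsProj (ker (f - 1)) ((n : K)⁻¹ • ∑ i ∈ range n, f ^ i) where
  map_mem x := by
    have h : (f - 1) * ((n : K)⁻¹ • ∑ i ∈ range n, f ^ i) = 0 := by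
      rw [mul_smul_comm, mul_geom_sum, hf, sub_self, smul_zero]
    exact LinearMap.congr_fun h x
  map_id x hx := by
    rw [mem_ker, LinearMap.sub_apply, one_apply, sub_eq_zero] at hx
    simp only [LinearMap.smul_apply, LinearMap.sum_apply, pow_apply, Function.iterate_fixed hx,
      sum_const, card_range, ← Nat.cast_smul_eq_nsmul K, smul_smul, inv_mul_cancel₀ hn, one_smul]

theorem natCast_mul_finrank_ker_sub_one [FiniteDimensional K V] (hf : f ^ n = 1)
    (hn : (n : K) ≠ 0) :
    (n : K) * finrank K (ker (f - 1)) = trace K V (∑ i ∈ range n, f ^ i) := by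
  rw [← (isProj_ker_sub_one_of_pow_eq_one hf hn).trace, map_smul, smul_eq_mul,
    mul_inv_cancel_left₀ hn]

end Module.End

theorem Matrix.natCast_mul_finrank_ker_toLin'_sub_one {K ι : Type*} [Field K] [Fintype ι]
    [DecidableEq ι] {A : Matrix ι ι K} {n : ℕ} (hA : A ^ n = 1) (hn : (n : K) ≠ 0) :
    (n : K) * Module.finrank K (LinearMap.ker (toLin' (A - 1))) =
      (∑ i ∈ range n, A ^ i).trace := by
  have h := Module.End.natCast_mul_finrank_ker_sub_one (f := toLinAlgEquiv' A)
    (by rw [← map_pow, hA, map_one]) hn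
  rw [← map_one toLinAlgEquiv', ← map_sub, ← sum_congr rfl fun i _ => map_pow _ A i,
    ← map_sum] at h
  exact h.trans (trace_toLin'_eq _)

/- The matrices are integral; identities between them are checked by `decide` over `ℤ`
and transported along `Int.castRingHom`. -/
namespace DelPezzo6

def chi : Matrix (Fin 8) (Fin 8) ℤ :=
  of fun i j =>
    if i = j then 1
    else if i.val < 6 ∧ (j.val = 6 ∨ j.val = 7) then -1
    else if i.val = 6 ∧ j.val = 7 then 3
    else 0

def chiInv : Matrix (Fin 8) (Fin 8) ℤ :=
  !![1, 0, 0, 0, 0, 0, 1, -2;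
     0, 1, 0, 0, 0, 0, 1, -2;
     0, 0, 1, 0, 0, 0, 1, -2;
     0, 0, 0, 1, 0, 0, 1, -2;
     0, 0, 0, 0, 1, 0, 1, -2;
     0, 0, 0, 0, 0, 1, 1, -2;
     0, 0, 0, 0, 0, 0, 1, -3;
     0, 0, 0, 0, 0, 0, 0, 1]

def serre : Matrix (Fin 8) (Fin 8) ℤ :=
  !![ 2,  1,  1,  1,  1,  1, -5, -2;
      1,  2,  1,  1,  1,  1, -5, -2;
      1,  1,  2,  1,  1,  1, -5, -2;
      1,  1,  1,  2,  1,  1, -5, -2;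
      1,  1,  1,  1,  2,  1, -5, -2;
      1,  1,  1,  1,  1,  2, -5, -2;
      2,  2,  2,  2,  2,  2, -8, -3;
     -1, -1, -1, -1, -1, -1,  3,  1]

theorem chi_mul_chiInv : chi * chiInv = 1 := by decide

theorem chiInv_mul_transpose_chi : chiInv * chiᵀ = serre := by decide

theorem serre_pow_three : serre ^ 3 = 1 := by decide

theorem trace_geom_sum_serre : (∑ i ∈ range 3, serre ^ i).trace = 18 := by decide

theorem map_chi {R : Type*} [Ring R] :
    chi.map (Int.castRingHom R) = of fun i j =>
      if i = j then 1
      else if i.val < 6 ∧ (j.val = 6 ∨ j.val = 7) then -1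
      else if i.val = 6 ∧ j.val = 7 then 3
      else 0 := by
  ext i j
  simp only [chi, map_apply, of_apply, apply_ite (Int.castRingHom R)]
  norm_num

theorem inv_mul_transpose_map_chi {R : Type*} [CommRing R] :
    (chi.map (Int.castRingHom R))⁻¹ * (chi.map (Int.castRingHom R))ᵀ =
      serre.map (Int.castRingHom R) := by
  have h_inv : chi.map (Int.castRingHom R) * chiInv.map (Int.castRingHom R) = 1 := by
    rw [← Matrix.map_mul, chi_mul_chiInv, Matrix.map_one _ (map_zero _) (map_one _)]
  rw [inv_eq_right_inv h_inv, ← transpose_map, ← Matrix.map_mul, chiInv_mul_transpose_chi]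

end DelPezzo6

open DelPezzo6 in
/-- For the dP_6 Serre operator `S_6 = χ_6⁻¹ χ_6ᵀ` (an 8×8 matrix), `S_6³ = I`
and the 1-eigenspace of `S_6` is 6-dimensional. -/
theorem stmt10 (χ S : Matrix (Fin 8) (Fin 8) ℚ)
    (hχ : χ = Matrix.of fun i j =>
      if i = j then 1
      else if i.val < 6 ∧ (j.val = 6 ∨ j.val = 7) then -1
      else if i.val = 6 ∧ j.val = 7 then 3
      else 0)
    (hS : S = χ⁻¹ * χᵀ) :
    S ^ 3 = 1 ∧ Module.finrank ℚ (LinearMap.ker (Matrix.toLin' (S - 1))) = 6 := by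
  have hS_serre : S = (Int.castRingHom ℚ).mapMatrix serre := by
    rw [hS, hχ, ← map_chi, inv_mul_transpose_map_chi, RingHom.mapMatrix_apply]
  have hS3 : S ^ 3 = 1 := by rw [hS_serre, ← map_pow, serre_pow_three, map_one]
  have htrace : (∑ i ∈ range 3, S ^ i).trace = 18 :=
    calc (∑ i ∈ range 3, S ^ i).trace
        = ((Int.castRingHom ℚ).mapMatrix (∑ i ∈ range 3, serre ^ i)).trace := by
          simp only [hS_serre, map_sum, map_pow]
      _ = 18 := by
          rw [RingHom.mapMatrix_apply, ← AddMonoidHom.map_trace, trace_geom_sum_serre, map_ofNat]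
  have hdim := Matrix.natCast_mul_finrank_ker_toLin'_sub_one hS3 (by norm_num)
  rw [htrace, Nat.cast_ofNat] at hdim
  exact ⟨hS3, by exact_mod_cast (by linarith :
    (Module.finrank ℚ (LinearMap.ker (toLin' (S - 1))) : ℚ) = 6)⟩
end

section
/- For the matrix S_7 = χ_7^{-1} χ_7^T associated to dP_7 (9×9), S_7^4 = I but S_7^2 ≠ I; indeed S_7^2 has both 1 and −1 as eigenvalues. -/
/-!
Since `χ_7` is unitriangular its inverse is an explicit integer matrix, and `S_7²` turns out to be
an involution different from `±1`. For an involution `M`, `(M - 1) * (M + 1) = 0`, so `M + 1` is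
singular unless `M = 1`, and `M - 1` is singular unless `M = -1`.
-/

open Matrix

section InvolutionDet

variable {n K : Type*} [Fintype n] [DecidableEq n] [Field K]

theorem Matrix.det_eq_zero_of_mul_eq_zero {A B : Matrix n n K} (hAB : A * B = 0) (hA : A ≠ 0) :
    B.det = 0 := by
  by_contra hB
  have hBunit : IsUnit B := (isUnit_iff_isUnit_det B).2 (isUnit_iff_ne_zero.2 hB)
  exact hA (hBunit.mul_left_eq_zero.1 hAB)

theorem Matrix.det_add_one_eq_zero_of_sq_eq_one {M : Matrix n n K} (hM : M ^ 2 = 1)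
    (hne : M ≠ 1) : (M + 1).det = 0 :=
  det_eq_zero_of_mul_eq_zero (A := M - 1) (by rw [← sub_eq_zero.2 hM]; noncomm_ring)
    (sub_ne_zero.2 hne)

theorem Matrix.det_sub_one_eq_zero_of_sq_eq_one {M : Matrix n n K} (hM : M ^ 2 = 1)
    (hne : M ≠ -1) : (M - 1).det = 0 :=
  det_eq_zero_of_mul_eq_zero (A := M + 1) (by rw [← sub_eq_zero.2 hM]; noncomm_ring)
    (by rwa [Ne, add_eq_zero_iff_eq_neg])

end InvolutionDet

def chi7 : Matrix (Fin 9) (Fin 9) ℚ :=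
  Matrix.of fun i j =>
    if i = j then 1
    else if i.val < 7 ∧ (j.val = 7 ∨ j.val = 8) then -1
    else if i.val = 7 ∧ j.val = 8 then 3
    else 0

def chi7Inv : Matrix (Fin 9) (Fin 9) ℚ :=
  !![1, 0, 0, 0, 0, 0, 0, 1, -2;
     0, 1, 0, 0, 0, 0, 0, 1, -2;
     0, 0, 1, 0, 0, 0, 0, 1, -2;
     0, 0, 0, 1, 0, 0, 0, 1, -2;
     0, 0, 0, 0, 1, 0, 0, 1, -2;
     0, 0, 0, 0, 0, 1, 0, 1, -2;
     0, 0, 0, 0, 0, 0, 1, 1, -2;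
     0, 0, 0, 0, 0, 0, 0, 1, -3;
     0, 0, 0, 0, 0, 0, 0, 0, 1]

theorem chi7_inv : chi7⁻¹ = chi7Inv :=
  inv_eq_right_inv (by decide +kernel)

def serre7Sq : Matrix (Fin 9) (Fin 9) ℚ :=
  !![ 2,  1,  1,  1,  1,  1,  1,  -6, -3;
      1,  2,  1,  1,  1,  1,  1,  -6, -3;
      1,  1,  2,  1,  1,  1,  1,  -6, -3;
      1,  1,  1,  2,  1,  1,  1,  -6, -3;
      1,  1,  1,  1,  2,  1,  1,  -6, -3;
      1,  1,  1,  1,  1,  2,  1,  -6, -3;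
      1,  1,  1,  1,  1,  1,  2,  -6, -3;
      3,  3,  3,  3,  3,  3,  3, -15, -7;
     -3, -3, -3, -3, -3, -3, -3,  14,  6]

theorem serre7_sq : (chi7⁻¹ * chi7ᵀ) ^ 2 = serre7Sq := by
  rw [chi7_inv]
  decide +kernel

theorem serre7Sq_sq : serre7Sq ^ 2 = 1 := by
  decide +kernel

theorem serre7Sq_ne_one : serre7Sq ≠ 1 := by
  decide +kernel

theorem serre7Sq_ne_neg_one : serre7Sq ≠ -1 := by
  decide +kernel

/-- For the dP_7 Serre operator `S_7 = χ_7⁻¹ χ_7ᵀ` (a 9×9 matrix), `S_7⁴ = I` but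
`S_7² ≠ I`; indeed `S_7²` has both `1` and `-1` as eigenvalues, i.e.
`det(S_7² + I) = 0` and `det(S_7² - I) = 0`. -/
theorem stmt11 :
    let χ : Matrix (Fin 9) (Fin 9) ℚ :=
      Matrix.of fun i j =>
        if i = j then 1
        else if i.val < 7 ∧ (j.val = 7 ∨ j.val = 8) then -1
        else if i.val = 7 ∧ j.val = 8 then 3
        else 0
    let S := χ⁻¹ * χᵀ
    S ^ 4 = 1 ∧ S ^ 2 ≠ 1 ∧ (S ^ 2 + 1).det = 0 ∧ (S ^ 2 - 1).det = 0 := by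
  intro χ S
  have hS2 : S ^ 2 = serre7Sq := serre7_sq
  have hS4 : S ^ 4 = 1 := by rw [show 4 = 2 * 2 from rfl, pow_mul, hS2, serre7Sq_sq]
  rw [hS2]
  exact ⟨hS4, serre7Sq_ne_one, det_add_one_eq_zero_of_sq_eq_one serre7Sq_sq serre7Sq_ne_one,
    det_sub_one_eq_zero_of_sq_eq_one serre7Sq_sq serre7Sq_ne_neg_one⟩
end

section
/- For 1 ≤ n ≤ 4, the matrix S_n = χ_n^{-1} χ_n^T has two distinct negative real eigenvalues λ_± satisfying λ_+ λ_- = 1, λ_+ + λ_- = −(7−n), with λ_- < −1 < λ_+ < 0; in particular no power of S_n equals ±I. -/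
/-!
The vector `v = (1 + 2λ, …, 1 + 2λ, n - 3 + 3λ, 9 - 2n)` satisfies `χᵀ v = λ χ v` whenever
`λ² + (7 - n)λ + 1 = 0`, so it is an eigenvector of `S = χ⁻¹ χᵀ` for each root of that quadratic
(and `v ≠ 0`, its last coordinate being odd).
For `n ≤ 4` the roots are real with product `1`, so one of them has absolute value `> 1`;
`λ^q` is an eigenvalue of `S^q` and cannot equal `±1`.
-/

open Matrix

section Eigenvector

variable {m K : Type*} [Fintype m] [DecidableEq m]

lemma pow_mulVec_of_mulVec_eq_smul [CommRing K] {A : Matrix m m K} {v : m → K} {l : K}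
    (h : A *ᵥ v = l • v) (q : ℕ) : A ^ q *ᵥ v = l ^ q • v := by
  induction q with
  | zero => simp
  | succ q ih =>
    rw [pow_succ, ← mulVec_mulVec, h, mulVec_smul, ih, smul_smul, pow_succ']

lemma inv_mul_mulVec_of_mulVec_eq_smul_mulVec [CommRing K] {A B : Matrix m m K} {v : m → K}
    {l : K} (hA : IsUnit A.det) (h : B *ᵥ v = l • A *ᵥ v) : (A⁻¹ * B) *ᵥ v = l • v := by
  rw [← mulVec_mulVec, h, mulVec_smul, mulVec_mulVec, nonsing_inv_mul A hA, one_mulVec]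

variable [Field K] {A : Matrix m m K} {v : m → K} {l : K}

lemma det_sub_smul_one_eq_zero_of_mulVec_eq_smul (hv : v ≠ 0) (h : A *ᵥ v = l • v) :
    (A - l • 1).det = 0 :=
  exists_mulVec_eq_zero_iff.1 ⟨v, hv, by rw [sub_mulVec, smul_mulVec, one_mulVec, h, sub_self]⟩

lemma pow_eq_of_mulVec_eq_smul_of_pow_eq_smul_one (hv : v ≠ 0) (h : A *ᵥ v = l • v) {q : ℕ}
    {c : K} (hq : A ^ q = c • 1) : l ^ q = c :=
  smul_left_injective K hv <| by
    simp only [← pow_mulVec_of_mulVec_eq_smul h, hq, smul_mulVec, one_mulVec]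

lemma pow_ne_smul_one_of_mulVec_eq_smul [LinearOrder K] [IsStrictOrderedRing K] {c : K}
    (hv : v ≠ 0) (h : A *ᵥ v = l • v) (hl : 1 < |l|) (hc : |c| ≤ 1) {q : ℕ} (hq : q ≠ 0) :
    A ^ q ≠ c • 1 := by
  intro hAq
  have hlq : |l| ^ q ≤ 1 := by
    rw [← abs_pow, pow_eq_of_mulVec_eq_smul_of_pow_eq_smul_one hv h hAq]
    exact hc
  exact (one_lt_pow₀ hl hq).not_ge hlq

end Eigenvector

lemma exists_vieta_roots_of_two_lt {c : ℝ} (hc : 2 < c) :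
    ∃ lp lm : ℝ, lp * lm = 1 ∧ lp + lm = -c ∧ lm < -1 ∧ -1 < lp ∧ lp < 0 := by
  set s := √(c ^ 2 - 4)
  have hs : s ^ 2 = c ^ 2 - 4 := Real.sq_sqrt (by nlinarith)
  have hs_nonneg : 0 ≤ s := Real.sqrt_nonneg _
  refine ⟨(-c + s) / 2, (-c - s) / 2, by linear_combination -hs / 4, by ring, ?_, ?_, ?_⟩ <;>
    nlinarith

section Chi

lemma sum_fin_add_two {M : Type*} [AddCommMonoid M] {n : ℕ} (f : Fin (n + 2) → M) :
    ∑ j, f j =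
      ∑ k : Fin n, f k.castSucc.castSucc + f (Fin.last n).castSucc + f (Fin.last (n + 1)) := by
  rw [Fin.sum_univ_castSucc, Fin.sum_univ_castSucc]

variable (n : ℕ)

def chi : Matrix (Fin (n + 2)) (Fin (n + 2)) ℝ :=
  Matrix.of fun i j =>
    if i = j then 1
    else if i.val < n ∧ (j.val = n ∨ j.val = n + 1) then -1
    else if i.val = n ∧ j.val = n + 1 then 3
    else 0

lemma det_chi : (chi n).det = 1 := by
  rw [det_of_isUpperTriangular]
  · simp [chi]
  · intro i j (hji : j < i)
    have hi := i.isLt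
    simp only [chi, of_apply]
    rw [if_neg (by rintro rfl; exact hji.false), if_neg (by omega), if_neg (by omega)]

def chiEigenvector (l : ℝ) : Fin (n + 2) → ℝ :=
  Fin.lastCases (9 - 2 * n) (Fin.lastCases ((n - 3) + 3 * l) fun _ => 1 + 2 * l)

lemma chiEigenvector_ne_zero (l : ℝ) : chiEigenvector n l ≠ 0 := by
  intro h
  have h_last := congrFun h (Fin.last _)
  simp only [chiEigenvector, Fin.lastCases_last, Pi.zero_apply, sub_eq_zero] at h_last
  have : 9 = 2 * n := by exact_mod_cast h_last
  omega

lemma chi_transpose_mulVec_chiEigenvector {l : ℝ} (hl : l ^ 2 + (7 - n) * l + 1 = 0) :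
    (chi n)ᵀ *ᵥ chiEigenvector n l = l • chi n *ᵥ chiEigenvector n l := by
  have h₁ (k : Fin n) : (k : ℕ) ≠ n := k.isLt.ne
  have h₂ (k : Fin n) : (k : ℕ) ≠ n + 1 := by omega
  ext i
  refine Fin.lastCases ?_ (Fin.lastCases ?_ fun k => ?_) i <;>
    simp only [mulVec, dotProduct, sum_fin_add_two, transpose_apply, chi, of_apply, chiEigenvector,
      Pi.smul_apply, Fin.lastCases_castSucc, Fin.lastCases_last, Fin.castSucc_inj,
      Fin.castSucc_ne_last, (Fin.castSucc_ne_last _).symm, Fin.val_castSucc, Fin.val_last,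
      Fin.is_lt, h₁, h₂, Nat.left_eq_add, add_lt_iff_neg_left, lt_self_iff_false, not_lt_zero,
      one_ne_zero, ↓reduceIte, and_false, false_and, true_and, or_false, or_true, ite_mul,
      zero_mul, Finset.sum_ite_eq, Finset.sum_ite_eq', Finset.mem_univ, Finset.sum_const,
      Finset.card_univ, Fintype.card_fin]
  · ring
  · linear_combination (-3) * hl
  · linear_combination hl

lemma inv_mul_transpose_chi_mulVec_chiEigenvector {l : ℝ} (hl : l ^ 2 + (7 - n) * l + 1 = 0) :
    ((chi n)⁻¹ * (chi n)ᵀ) *ᵥ chiEigenvector n l = l • chiEigenvector n l :=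
  inv_mul_mulVec_of_mulVec_eq_smul_mulVec (by simp [det_chi])
    (chi_transpose_mulVec_chiEigenvector n hl)

end Chi

theorem stmt12_general (n : ℕ) (h4 : n ≤ 4) :
    let χ : Matrix (Fin (n + 2)) (Fin (n + 2)) ℝ :=
      Matrix.of fun i j =>
        if i = j then 1
        else if i.val < n ∧ (j.val = n ∨ j.val = n + 1) then -1
        else if i.val = n ∧ j.val = n + 1 then 3
        else 0
    let S := χ⁻¹ * χᵀ
    ∃ lp lm : ℝ, lp * lm = 1 ∧ lp + lm = -((7 : ℝ) - n) ∧
      lm < -1 ∧ -1 < lp ∧ lp < 0 ∧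
      (S - lp • 1).det = 0 ∧ (S - lm • 1).det = 0 ∧
      ∀ q : ℕ, 1 ≤ q → S ^ q ≠ 1 ∧ S ^ q ≠ -1 := by
  intro χ S
  have hS (l : ℝ) (hl : l ^ 2 + (7 - n) * l + 1 = 0) :
      S *ᵥ chiEigenvector n l = l • chiEigenvector n l :=
    inv_mul_transpose_chi_mulVec_chiEigenvector n hl
  obtain ⟨lp, lm, hprod, hsum, hlm, hlp, hlp_neg⟩ :=
    exists_vieta_roots_of_two_lt (c := 7 - n) (by linarith [show (n : ℝ) ≤ 4 by exact_mod_cast h4])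
  have hSp := hS lp (by linear_combination lp * hsum - hprod)
  have hSm := hS lm (by linear_combination lm * hsum - hprod)
  have hlm_abs : 1 < |lm| := by rw [abs_of_neg (by linarith)]; linarith
  have hv (l : ℝ) := chiEigenvector_ne_zero n l
  refine ⟨lp, lm, hprod, hsum, hlm, hlp, hlp_neg,
    det_sub_smul_one_eq_zero_of_mulVec_eq_smul (hv lp) hSp,
    det_sub_smul_one_eq_zero_of_mulVec_eq_smul (hv lm) hSm, fun q hq => ⟨?_, ?_⟩⟩
  · simpa using pow_ne_smul_one_of_mulVec_eq_smul (hv lm) hSm hlm_abs (c := 1) (by simp) (by omega)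
  · simpa using pow_ne_smul_one_of_mulVec_eq_smul (hv lm) hSm hlm_abs (c := -1) (by simp) (by omega)

/-- For `1 ≤ n ≤ 4`, the dP_n Serre operator `S_n = χ_n⁻¹ χ_nᵀ` has two distinct
negative real eigenvalues `λ₊, λ₋` with `λ₊ λ₋ = 1`, `λ₊ + λ₋ = -(7-n)`, and
`λ₋ < -1 < λ₊ < 0`; in particular no power of `S_n` equals `±I`. -/
theorem stmt12 (n : ℕ) (h1 : 1 ≤ n) (h4 : n ≤ 4) :
    let χ : Matrix (Fin (n + 2)) (Fin (n + 2)) ℝ :=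
      Matrix.of fun i j =>
        if i = j then 1
        else if i.val < n ∧ (j.val = n ∨ j.val = n + 1) then -1
        else if i.val = n ∧ j.val = n + 1 then 3
        else 0
    let S := χ⁻¹ * χᵀ
    ∃ lp lm : ℝ, lp * lm = 1 ∧ lp + lm = -((7 : ℝ) - n) ∧
      lm < -1 ∧ -1 < lp ∧ lp < 0 ∧
      (S - lp • 1).det = 0 ∧ (S - lm • 1).det = 0 ∧
      ∀ q : ℕ, 1 ≤ q → S ^ q ≠ 1 ∧ S ^ q ≠ -1 :=
  stmt12_general n h4
end
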